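/- arXiv:math/0010117 — 2 statements merged into one kernel-verified Lean document; each statement's English description precedes it below -/
import Mathlib

section
/- The anti-commutators {X_iX_j + X_jX_i : 1 ≤ i ≤ j ≤ n} form a Gröbner basis of the anti-commutator ideal C with respect to ≺_t. Consequently, in_{≺_t}(C) is the two-sided ideal of K⟨X_1,…,X_n⟩ generated by the words {X_jX_i : 1 ≤ i ≤ j ≤ n}. -/
open scoped BigOperators

/-- Words in the letters `X_1, …, X_n`: the free monoid on `Fin n`. -/
abbrev Word (n : ℕ) := FreeMonoid (Fin n)

/-- The free associative algebra `K⟨X_1,…,X_n⟩`, as the monoid algebra of the free monoid. -/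
abbrev FA (K : Type) [Field K] (n : ℕ) := MonoidAlgebra K (Word n)

/-- The word `w`, viewed as an element of `K⟨X_1,…,X_n⟩`. -/
noncomputable def ofW (K : Type) [Field K] {n : ℕ} (w : Word n) : FA K n :=
  MonoidAlgebra.of K (Word n) w

/-- The variable `X_i`. -/
noncomputable def Xv (K : Type) [Field K] {n : ℕ} (i : Fin n) : FA K n :=
  ofW K (FreeMonoid.of i)

/-- The set of anti-commutators `X_iX_j + X_jX_i`, `i ≤ j`. -/
def antiCommSet (K : Type) [Field K] (n : ℕ) : Set (FA K n) :=
  { f | ∃ i j : Fin n, i ≤ j ∧ f = Xv K i * Xv K j + Xv K j * Xv K i }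

/-- The anti-commutator ideal `C`. -/
noncomputable def antiCommIdeal (K : Type) [Field K] (n : ℕ) : TwoSidedIdeal (FA K n) :=
  TwoSidedIdeal.span (antiCommSet K n)

/-- The exterior algebra `E(V)` as the quotient of `K⟨X_1,…,X_n⟩` by `C`. -/
abbrev EV (K : Type) [Field K] (n : ℕ) := (antiCommIdeal K n).ringCon.Quotient

/-- The quotient map `π : K⟨X_1,…,X_n⟩ → E(V)`. -/
noncomputable def piE (K : Type) [Field K] (n : ℕ) : FA K n →+* EV K n :=
  RingCon.mk' _

noncomputable instance (K : Type) [Field K] (n : ℕ) : Module K (EV K n) :=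
  { (inferInstance : DistribMulAction K (EV K n)) with
    add_smul := fun a b f => by
      obtain ⟨x, rfl⟩ := Quotient.mk''_surjective f
      show (((a + b) • x : FA K n) : EV K n) = ((a • x : FA K n) : EV K n) + ((b • x : FA K n) : EV K n)
      rw [← RingCon.coe_add, add_smul]
    zero_smul := fun f => by
      obtain ⟨x, rfl⟩ := Quotient.mk''_surjective f
      show (((0 : K) • x : FA K n) : EV K n) = ((0 : FA K n) : EV K n)
      rw [zero_smul] }

/-- The sorted word associated to a finite set of indices. -/
def wordOf {n : ℕ} (A : Finset (Fin n)) : Word n :=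
  FreeMonoid.ofList (A.sort (· ≤ ·))

/-- The square-free monomial `x_A ∈ E(V)`. -/
noncomputable def xF (K : Type) [Field K] {n : ℕ} (A : Finset (Fin n)) : EV K n :=
  piE K n (ofW K (wordOf A))

/-- A monoid well-order on the free commutative monoid on `x_1,…,x_n`
(identified additively with `Fin n →₀ ℕ`): a total, well-founded, translation
invariant strict order. -/
structure IsCommMonoidWellOrder (n : ℕ) (r : (Fin n →₀ ℕ) → (Fin n →₀ ℕ) → Prop) : Prop where
  trans : Transitive r
  irrefl : ∀ a, ¬ r a a
  total : ∀ a b, r a b ∨ a = b ∨ r b a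
  wf : WellFounded r
  mul_compat : ∀ a b c, r a b → r (a + c) (b + c)

/-- A monoid well-order on the free monoid `⟨X_1,…,X_n⟩`. -/
structure IsMonoidWellOrder (n : ℕ) (r : Word n → Word n → Prop) : Prop where
  trans : Transitive r
  irrefl : ∀ a, ¬ r a a
  total : ∀ a b, r a b ∨ a = b ∨ r b a
  wf : WellFounded r
  mul_compat : ∀ a b p q, r a b → r (p * a * q) (p * b * q)

/-- A finite set of indices, viewed as a square-free element of the free
commutative monoid. -/
noncomputable def sqMon {n : ℕ} (A : Finset (Fin n)) : Fin n →₀ ℕ :=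
  Multiset.toFinsupp (A.val)

/-- The restriction `≺_e` of the order `≺_s` (given by `es`) to square-free monomials,
identified with finite subsets of `{1,…,n}`. -/
def precE {n : ℕ} (es : (Fin n →₀ ℕ) → (Fin n →₀ ℕ) → Prop)
    (A B : Finset (Fin n)) : Prop :=
  es (sqMon A) (sqMon B)

/-- The degree-lexicographic order on words, with `X_1 < X_2 < ⋯ < X_n`. -/
def degLex {n : ℕ} (M N : Word n) : Prop :=
  (FreeMonoid.toList M).length < (FreeMonoid.toList N).length ∨
    ((FreeMonoid.toList M).length = (FreeMonoid.toList N).length ∧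
      List.Lex (· < ·) (FreeMonoid.toList M) (FreeMonoid.toList N))

/-- The set of letters of a word. -/
def lettersOf {n : ℕ} (M : Word n) : Finset (Fin n) :=
  (FreeMonoid.toList M).toFinset

/-- A word is square-free iff no letter is repeated; equivalently `π(M) ≠ 0` in `E(V)`. -/
def SqFreeWord {n : ℕ} (M : Word n) : Prop :=
  (FreeMonoid.toList M).Nodup

/-- The order `≺_t` on words: square-free words are compared first by the `≺_e`-order on
their underlying square-free commutative monomials, ties broken degree-lexicographically;
words mapping to `0` in the exterior algebra are compared degree-lexicographically. -/
def precT {n : ℕ} (es : (Fin n →₀ ℕ) → (Fin n →₀ ℕ) → Prop) (M N : Word n) : Prop :=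
  (SqFreeWord M ∧ SqFreeWord N ∧
    (precE es (lettersOf M) (lettersOf N) ∨ (lettersOf M = lettersOf N ∧ degLex M N)))
  ∨ ((¬ SqFreeWord M ∨ ¬ SqFreeWord N) ∧ degLex M N)

/-- `m` is the `r`-largest word occurring in `f` with nonzero coefficient. -/
def IsLeadWord {K : Type} [Field K] {n : ℕ} (r : Word n → Word n → Prop)
    (f : FA K n) (m : Word n) : Prop :=
  m ∈ f.coeff.support ∧ ∀ m' ∈ f.coeff.support, m' ≠ m → r m' m

/-- The initial ideal `in_r(J)` of a two-sided ideal `J ⊆ K⟨X_1,…,X_n⟩`: the two-sided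
ideal generated by the leading words of the nonzero elements of `J`. -/
noncomputable def inIdeal {K : Type} [Field K] {n : ℕ} (r : Word n → Word n → Prop)
    (J : TwoSidedIdeal (FA K n)) : TwoSidedIdeal (FA K n) :=
  TwoSidedIdeal.span { g | ∃ f m, f ∈ J ∧ f ≠ 0 ∧ IsLeadWord r f m ∧ g = ofW K m }

/-- `G` is a Gröbner basis of `J` w.r.t. `r`: `G` consists of nonzero elements of `J`
whose leading words generate `in_r(J)`. -/
def IsGB {K : Type} [Field K] {n : ℕ} (r : Word n → Word n → Prop)
    (J : TwoSidedIdeal (FA K n)) (G : Set (FA K n)) : Prop :=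
  (∀ g ∈ G, g ∈ J ∧ g ≠ 0) ∧
  TwoSidedIdeal.span { h | ∃ g ∈ G, ∃ m, IsLeadWord r g m ∧ h = ofW K m } = inIdeal r J

/-- `G` is a minimal Gröbner basis: no leading word of an element of `G` is a subword
(factor) of the leading word of another element. -/
def IsMinGB {K : Type} [Field K] {n : ℕ} (r : Word n → Word n → Prop)
    (J : TwoSidedIdeal (FA K n)) (G : Set (FA K n)) : Prop :=
  IsGB r J G ∧
  ∀ g ∈ G, ∀ g' ∈ G, g ≠ g' → ∀ m m', IsLeadWord r g m → IsLeadWord r g' m' →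
    ¬ (FreeMonoid.toList m <:+: FreeMonoid.toList m')

/-- An element of `K⟨X_1,…,X_n⟩` is homogeneous of degree `d`. -/
def IsHomogOfDeg {K : Type} [Field K] {n : ℕ} (f : FA K n) (d : ℕ) : Prop :=
  ∀ w ∈ f.coeff.support, (FreeMonoid.toList w).length = d

/-- `L ⊆ E(V)` is a monomial ideal: it is generated by square-free monomials. -/
def IsMonomialIdealE {K : Type} [Field K] {n : ℕ} (L : TwoSidedIdeal (EV K n)) : Prop :=
  ∃ S : Set (Finset (Fin n)), L = TwoSidedIdeal.span (xF K '' S)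

/-- The set `U_L(m)` for `m = x_A`: square-free monomials `u` in the variables strictly
between `min A` and `max A` such that `u·(m/x_{min A}) ∉ L` and `u·(m/x_{max A}) ∉ L`. -/
noncomputable def UL {K : Type} [Field K] {n : ℕ} (L : TwoSidedIdeal (EV K n))
    (A : Finset (Fin n)) : Set (Finset (Fin n)) :=
  { u | ∃ hA : A.Nonempty,
      (∀ i ∈ u, A.min' hA < i ∧ i < A.max' hA) ∧
      xF K u * xF K (A.erase (A.min' hA)) ∉ L ∧
      xF K u * xF K (A.erase (A.max' hA)) ∉ L }

/-- `x_A` is a minimal (monomial) generator of the monomial ideal `L`. -/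
def IsMinGenE {K : Type} [Field K] {n : ℕ} (L : TwoSidedIdeal (EV K n))
    (A : Finset (Fin n)) : Prop :=
  xF K A ∈ L ∧ ∀ B ⊆ A, B ≠ A → xF K B ∉ L

/-- `L` is squeezed: `U_L(m) = {1}` for every minimal generator `m` of `L`. -/
def IsSqueezed {K : Type} [Field K] {n : ℕ} (L : TwoSidedIdeal (EV K n)) : Prop :=
  ∀ A : Finset (Fin n), IsMinGenE L A → UL L A = {∅}

/-- `L` is stable: if `m ∈ L` and `x_j` is the largest variable dividing `m`,
then `x_i·(m/x_j) ∈ L` for all `i ≤ j`. -/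
def IsStableE {K : Type} [Field K] {n : ℕ} (L : TwoSidedIdeal (EV K n)) : Prop :=
  ∀ A : Finset (Fin n), ∀ hA : A.Nonempty, xF K A ∈ L →
    ∀ i ≤ A.max' hA, xF K {i} * xF K (A.erase (A.max' hA)) ∈ L

/-- `L` is strongly stable: if `m ∈ L` and `x_j` divides `m`, then
`x_i·(m/x_j) ∈ L` for all `i ≤ j` with `x_i·(m/x_j) ≠ 0`. -/
def IsStronglyStableE {K : Type} [Field K] {n : ℕ} (L : TwoSidedIdeal (EV K n)) : Prop :=
  ∀ A : Finset (Fin n), xF K A ∈ L → ∀ j ∈ A, ∀ i ≤ j,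
    xF K {i} * xF K (A.erase j) ≠ 0 → xF K {i} * xF K (A.erase j) ∈ L

/-- `δ` is the canonical `K`-linear section of `π`, sending `x_{i_1}⋯x_{i_r}` to
`X_{i_1}⋯X_{i_r}` for `i_1 < ⋯ < i_r`. -/
def IsDeltaSection {K : Type} [Field K] {n : ℕ} (δ : EV K n →ₗ[K] FA K n) : Prop :=
  ∀ A : Finset (Fin n), δ (xF K A) = ofW K (wordOf A)

/-- `x_A` is the `≺_e`-leading monomial of `0 ≠ f ∈ E(V)`, computed via the canonical
representative `δ f`. -/
def IsLeadE {K : Type} [Field K] {n : ℕ} (es : (Fin n →₀ ℕ) → (Fin n →₀ ℕ) → Prop)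
    (δ : EV K n →ₗ[K] FA K n) (f : EV K n) (A : Finset (Fin n)) : Prop :=
  wordOf A ∈ (δ f).coeff.support ∧
  ∀ w ∈ (δ f).coeff.support, w ≠ wordOf A → precE es (lettersOf w) A

/-- The initial ideal `in_{≺_e}(I)` of an ideal `I ⊆ E(V)`. -/
noncomputable def inE {K : Type} [Field K] {n : ℕ}
    (es : (Fin n →₀ ℕ) → (Fin n →₀ ℕ) → Prop) (δ : EV K n →ₗ[K] FA K n)
    (I : TwoSidedIdeal (EV K n)) : TwoSidedIdeal (EV K n) :=
  TwoSidedIdeal.span { h | ∃ f A, f ∈ I ∧ f ≠ 0 ∧ IsLeadE es δ f A ∧ h = xF K A }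

/-- `G` is a Gröbner basis of `I ⊆ E(V)` w.r.t. `≺_e`. -/
def IsGBE {K : Type} [Field K] {n : ℕ} (es : (Fin n →₀ ℕ) → (Fin n →₀ ℕ) → Prop)
    (δ : EV K n →ₗ[K] FA K n) (I : TwoSidedIdeal (EV K n)) (G : Set (EV K n)) : Prop :=
  (∀ g ∈ G, g ∈ I ∧ g ≠ 0) ∧
  TwoSidedIdeal.span { h | ∃ g ∈ G, ∃ A, IsLeadE es δ g A ∧ h = xF K A } = inE es δ I

/-- `G` is a minimal Gröbner basis of `I ⊆ E(V)` w.r.t. `≺_e`: moreover no leading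
monomial of an element of `G` divides the leading monomial of another element. -/
def IsMinGBE {K : Type} [Field K] {n : ℕ} (es : (Fin n →₀ ℕ) → (Fin n →₀ ℕ) → Prop)
    (δ : EV K n →ₗ[K] FA K n) (I : TwoSidedIdeal (EV K n)) (G : Set (EV K n)) : Prop :=
  IsGBE es δ I G ∧
  ∀ g ∈ G, ∀ g' ∈ G, g ≠ g' → ∀ A A', IsLeadE es δ g A → IsLeadE es δ g' A' → ¬ A ⊆ A'

/-- `I ⊆ E(V)` is a homogeneous ideal generated in degrees `≥ 2`: it is generated by
images of homogeneous elements of degree `≥ 2`. -/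
def IsHomogGenInDegGE2 {K : Type} [Field K] {n : ℕ} (I : TwoSidedIdeal (EV K n)) : Prop :=
  ∃ S : Set (FA K n), (∀ f ∈ S, ∃ d, 2 ≤ d ∧ IsHomogOfDeg f d) ∧
    I = TwoSidedIdeal.span (piE K n '' S)

/-- The action of an `n × n` matrix `g` on `K⟨X_1,…,X_n⟩` by the algebra endomorphism
determined by `X_i ↦ Σ_ℓ g_{ℓi} X_ℓ`. -/
noncomputable def actFA (K : Type) [Field K] {n : ℕ} (g : Matrix (Fin n) (Fin n) K) :
    FA K n →ₐ[K] FA K n :=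
  MonoidAlgebra.lift K (FA K n) (Word n)
    (FreeMonoid.lift fun i => ∑ l : Fin n, g l i • Xv K l)

/-- The degree-`d` homogeneous component of a two-sided ideal of `K⟨X_1,…,X_n⟩`,
as a `K`-subspace. -/
def degComp {K : Type} [Field K] {n : ℕ} (c : TwoSidedIdeal (FA K n)) (d : ℕ) :
    Submodule K (FA K n) where
  carrier := {f | f ∈ c ∧ IsHomogOfDeg f d}
  add_mem' := fun {a b} ha hb => ⟨c.add_mem ha.1 hb.1, fun w hw => by
    classical
    rcases Finset.mem_union.1 (Finsupp.support_add hw) with h | h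
    exacts [ha.2 w h, hb.2 w h]⟩
  zero_mem' := ⟨c.zero_mem, fun w hw => by simp at hw⟩
  smul_mem' := fun k f hf => ⟨by
      rw [Algebra.smul_def]
      exact c.mul_mem_left _ _ hf.1,
    fun w hw => hf.2 w (Finsupp.support_smul hw)⟩

/-- A two-sided ideal of `K⟨X_1,…,X_n⟩` is homogeneous (for the grading by word length). -/
def IsHomogIdeal {K : Type} [Field K] {n : ℕ} (a : TwoSidedIdeal (FA K n)) : Prop :=
  ∀ f ∈ a, ∀ d : ℕ, MonoidAlgebra.ofCoeff (f.coeff.filter (fun w => (FreeMonoid.toList w).length = d)) ∈ a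

/-- Evaluation of a polynomial in the matrix entries at an element of `GL_n(K)`. -/
noncomputable def evalGL {K : Type} [Field K] {n : ℕ}
    (p : MvPolynomial (Fin n × Fin n) K) (g : GL (Fin n) K) : K :=
  MvPolynomial.eval (fun q => (g : Matrix (Fin n) (Fin n) K) q.1 q.2) p

/-- The image `g(a)` of a two-sided ideal under the action of a matrix `g`. -/
noncomputable def mapIdealFA (K : Type) [Field K] {n : ℕ} (g : Matrix (Fin n) (Fin n) K)
    (a : TwoSidedIdeal (FA K n)) : TwoSidedIdeal (FA K n) :=
  TwoSidedIdeal.span ((actFA K g) '' (a : Set (FA K n)))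

/-- `b` is the generic initial ideal of `a` w.r.t. the order `r`: `b` is a monomial
ideal and there is a countable family of nonempty basic Zariski-open subsets of
`GL_n(K)` on whose (F_δ) intersection `in_r(g(a)) = b`. -/
def IsGin {K : Type} [Field K] {n : ℕ} (r : Word n → Word n → Prop)
    (a b : TwoSidedIdeal (FA K n)) : Prop :=
  (∃ S : Set (Word n), b = TwoSidedIdeal.span (ofW K '' S)) ∧
  ∃ ps : ℕ → MvPolynomial (Fin n × Fin n) K,
    (∀ k, ∃ g : GL (Fin n) K, evalGL (ps k) g ≠ 0) ∧
    (∃ g : GL (Fin n) K, ∀ k, evalGL (ps k) g ≠ 0) ∧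
    ∀ g : GL (Fin n) K, (∀ k, evalGL (ps k) g ≠ 0) →
      inIdeal r (mapIdealFA K (↑g) a) = b

/-- `bE` is the generic initial ideal of the ideal `I ⊆ E(V)` w.r.t. `≺_e`. -/
def IsGinE {K : Type} [Field K] {n : ℕ} (es : (Fin n →₀ ℕ) → (Fin n →₀ ℕ) → Prop)
    (δ : EV K n →ₗ[K] FA K n) (I bE : TwoSidedIdeal (EV K n)) : Prop :=
  IsMonomialIdealE bE ∧
  ∃ ps : ℕ → MvPolynomial (Fin n × Fin n) K,
    (∀ k, ∃ g : GL (Fin n) K, evalGL (ps k) g ≠ 0) ∧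
    (∃ g : GL (Fin n) K, ∀ k, evalGL (ps k) g ≠ 0) ∧
    ∀ g : GL (Fin n) K, (∀ k, evalGL (ps k) g ≠ 0) →
      ∀ gE : EV K n ≃+* EV K n, (∀ x, gE (piE K n x) = piE K n (actFA K (↑g) x)) →
        inE es δ (TwoSidedIdeal.span (⇑gE '' (I : Set (EV K n)))) = bE
/-!
Each anti-commutator has leading word `X_jX_i`, so everything comes down to showing that the
`≺_t`-leading word `m` of a nonzero `f ∈ C` contains a factor `X_jX_i` with `i ≤ j`, i.e. is not
strictly increasing. If it were, consider the functional sending a word to `(-1)^(inversions)` when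
it is a rearrangement of `m` and to `0` otherwise: it reads off the coefficient of `x_m` in `π f`,
so it vanishes on `C`. It is `±1` on `m`, hence some other rearrangement `w` of `m` occurs in `f`.
But `w` has the same letters as `m` and is degree-lexicographically larger, so `m ≺_t w`,
contradicting the choice of `m`.
-/

section Inversions

variable {α : Type*} [LinearOrder α]

def inversions : List α → ℕ
  | [] => 0
  | a :: l => l.countP (· < a) + inversions l

theorem inversions_append_swap {a b : α} (hab : a < b) (p q : List α) :
    inversions (p ++ b :: a :: q) = inversions (p ++ a :: b :: q) + 1 := by
  induction p with
  | nil =>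
    simp only [List.nil_append, inversions, hab, decide_true, List.countP_cons_of_pos,
      not_lt.mpr hab.le, decide_false, Bool.false_eq_true, not_false_eq_true,
      List.countP_cons_of_neg]
    omega
  | cons c p ih =>
    simp only [List.cons_append, inversions, ih,
      ((List.Perm.swap a b q).append_left p).countP_eq]
    omega

theorem List.Pairwise.lex_lt_of_perm {l l' : List α} (hl : l.Pairwise (· < ·)) (hp : l'.Perm l)
    (hne : l' ≠ l) : List.Lex (· < ·) l l' := by
  induction l generalizing l' with
  | nil => exact absurd hp.eq_nil hne
  | cons a t ih =>
    cases l' with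
    | nil => exact absurd hp.symm.eq_nil (List.cons_ne_nil a t)
    | cons b t' =>
      rcases List.mem_cons.mp (hp.subset List.mem_cons_self) with rfl | hbt
      · exact List.Lex.cons (ih hl.of_cons hp.cons_inv fun h => hne (by rw [h]))
      · exact List.Lex.rel ((List.pairwise_cons.mp hl).1 b hbt)

end Inversions

theorem MonoidAlgebra.linearMap_mul_mul_eq_zero {k G M : Type*} [CommSemiring k] [Monoid G]
    [AddCommMonoid M] [Module k M] (φ : MonoidAlgebra k G →ₗ[k] M) (s : MonoidAlgebra k G)
    (h : ∀ g g', φ (of k G g * s * of k G g') = 0) (a b : MonoidAlgebra k G) :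
    φ (a * s * b) = 0 := by
  have single_eq : ∀ (g : G) (c : k), single g c = c • of k G g := fun g c => by
    rw [of_apply, smul_single', mul_one]
  induction a using MonoidAlgebra.induction_linear generalizing b with
  | zero => simp
  | add a a' ha ha' => rw [add_mul, add_mul, map_add, ha, ha', add_zero]
  | single g c =>
    induction b using MonoidAlgebra.induction_linear with
    | zero => simp
    | add b b' hb hb' => rw [mul_add, map_add, hb, hb', add_zero]
    | single g' c' =>
      rw [single_eq, single_eq, smul_mul_assoc, smul_mul_assoc, mul_smul_comm, map_smul,
        map_smul, h, smul_zero, smul_zero]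

theorem TwoSidedIdeal.map_eq_zero_of_mem_span {R M : Type*} [Ring R] [AddCommGroup M]
    (φ : R →+ M) {S : Set R} (hS : ∀ s ∈ S, ∀ a b, φ (a * s * b) = 0) {f : R}
    (hf : f ∈ TwoSidedIdeal.span S) : φ f = 0 := by
  let I : TwoSidedIdeal R := .mk' {x | ∀ a b, φ (a * x * b) = 0}
    (fun a b => by simp)
    (fun hx hy a b => by rw [mul_add, add_mul, map_add, hx, hy, add_zero])
    (fun hx a b => by rw [mul_neg, neg_mul, map_neg, hx, neg_zero])
    (fun {x y} hy a b => by rw [← mul_assoc a x y]; exact hy (a * x) b)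
    (fun {x y} hx a b => by rw [← mul_assoc a x y, mul_assoc (a * x) y b]; exact hx a (y * b))
  have hfI : f ∈ I := TwoSidedIdeal.span_le.mpr (fun s hs => (TwoSidedIdeal.mem_mk' ..).mpr
    (hS s hs)) hf
  simpa using (TwoSidedIdeal.mem_mk' ..).mp hfI 1 1

section SignFunctional

variable (K : Type) [Field K] {n : ℕ}

open Classical in
/-- The coefficient of `x_A` in `π w`, with respect to the basis `Y`. -/
noncomputable def altCoeff (A : Finset (Fin n)) (w : Word n) : K :=
  if SqFreeWord w ∧ lettersOf w = A then (-1) ^ inversions (FreeMonoid.toList w) else 0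

noncomputable def altFunctional (A : Finset (Fin n)) : FA K n →ₗ[K] K :=
  Finsupp.linearCombination K (altCoeff K A) ∘ₗ (MonoidAlgebra.coeffLinearEquiv K).toLinearMap

variable {K}

theorem altFunctional_apply (A : Finset (Fin n)) (f : FA K n) :
    altFunctional K A f = ∑ w ∈ f.coeff.support, f.coeff w * altCoeff K A w := by
  simp [altFunctional, Finsupp.linearCombination_apply, Finsupp.sum]

theorem altCoeff_ne_zero {A : Finset (Fin n)} {w : Word n} (h : altCoeff K A w ≠ 0) :
    SqFreeWord w ∧ lettersOf w = A := by
  unfold altCoeff at h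
  split_ifs at h with hw
  exacts [hw, absurd rfl h]

theorem altCoeff_add_altCoeff_swap (A : Finset (Fin n)) (p q : List (Fin n)) (a b : Fin n) :
    altCoeff K A (FreeMonoid.ofList (p ++ a :: b :: q)) +
      altCoeff K A (FreeMonoid.ofList (p ++ b :: a :: q)) = 0 := by
  rcases eq_or_ne a b with rfl | hne
  · have : ¬ (p ++ a :: a :: q).Nodup := by simp [List.nodup_append]
    simp [altCoeff, SqFreeWord, this]
  wlog hab : a < b generalizing a b
  · rw [add_comm]
    exact this b a hne.symm (lt_of_le_of_ne (not_lt.mp hab) hne.symm)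
  have hperm : (p ++ b :: a :: q).Perm (p ++ a :: b :: q) := (List.Perm.swap a b q).append_left p
  have hletters : lettersOf (FreeMonoid.ofList (p ++ b :: a :: q)) =
      lettersOf (FreeMonoid.ofList (p ++ a :: b :: q)) :=
    List.toFinset_eq_of_perm _ _ hperm
  simp only [altCoeff, SqFreeWord, FreeMonoid.toList_ofList, hperm.nodup_iff, hletters,
    inversions_append_swap hab, pow_succ]
  by_cases h : (p ++ a :: b :: q).Nodup ∧ lettersOf (FreeMonoid.ofList (p ++ a :: b :: q)) = A
    <;> simp only [h, and_self, ↓reduceIte] <;> ring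

theorem altFunctional_word_mul_antiComm_mul_word (A : Finset (Fin n)) (i j : Fin n)
    (p q : Word n) :
    altFunctional K A (ofW K p * (Xv K i * Xv K j + Xv K j * Xv K i) * ofW K q) = 0 := by
  have hword : ∀ a b : Fin n, p * (FreeMonoid.of a * FreeMonoid.of b) * q =
      FreeMonoid.ofList (FreeMonoid.toList p ++ a :: b :: FreeMonoid.toList q) := fun a b =>
    FreeMonoid.toList.injective (by simp)
  have hofW : ∀ w, altFunctional K A (ofW K w) = altCoeff K A w := fun w => by
    simp [altFunctional_apply, ofW, MonoidAlgebra.of_apply, MonoidAlgebra.coeff_single]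
  simp only [Xv, ofW, mul_add, add_mul, ← map_mul, map_add]
  rw [← ofW, ← ofW, hofW, hofW, hword, hword, altCoeff_add_altCoeff_swap]

theorem altFunctional_eq_zero_of_mem (A : Finset (Fin n)) {f : FA K n}
    (hf : f ∈ antiCommIdeal K n) : altFunctional K A f = 0 :=
  TwoSidedIdeal.map_eq_zero_of_mem_span (altFunctional K A).toAddMonoidHom
    (by
      rintro _ ⟨i, j, -, rfl⟩
      exact MonoidAlgebra.linearMap_mul_mul_eq_zero _ _
        (altFunctional_word_mul_antiComm_mul_word A i j))
    hf

end SignFunctional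

section LeadingWords

variable {K : Type} [Field K] {n : ℕ}

theorem ne_zero_of_isLeadWord {r : Word n → Word n → Prop} {f : FA K n} {m : Word n}
    (h : IsLeadWord r f m) : f ≠ 0 := by
  rintro rfl
  simp [IsLeadWord] at h

theorem isLeadWord_single {r : Word n → Word n → Prop} (m : Word n) {c : K} (hc : c ≠ 0) :
    IsLeadWord r (MonoidAlgebra.single m c) m := by
  refine ⟨by simpa [MonoidAlgebra.coeff_single] using hc, fun m' hm' hne => ?_⟩
  rw [MonoidAlgebra.coeff_single] at hm'
  exact absurd (Finset.mem_singleton.mp (Finsupp.support_single_subset hm')) hne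

theorem isLeadWord_single_add_single {r : Word n → Word n → Prop} {m m' : Word n}
    (hr : r m' m) (hne : m' ≠ m) (c' : K) {c : K} (hc : c ≠ 0) :
    IsLeadWord r (MonoidAlgebra.single m' c' + MonoidAlgebra.single m c) m := by
  classical
  refine ⟨by simpa [MonoidAlgebra.coeff_single, hne] using hc, fun w hw hwm => ?_⟩
  have hw' := Finsupp.support_add hw
  rcases Finset.mem_union.mp hw' with hw' | hw'
  · rwa [Finset.mem_singleton.mp (Finsupp.support_single_subset hw')]
  · exact absurd (Finset.mem_singleton.mp (Finsupp.support_single_subset hw')) hwm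

theorem Xv_mul_Xv (a b : Fin n) :
    Xv K a * Xv K b = MonoidAlgebra.single (FreeMonoid.of a * FreeMonoid.of b) 1 := by
  rw [Xv, Xv, ofW, ofW, ← map_mul, MonoidAlgebra.of_apply]

theorem precT_of_mul_of_lt (es : (Fin n →₀ ℕ) → (Fin n →₀ ℕ) → Prop) {i j : Fin n}
    (hij : i < j) : precT es (FreeMonoid.of i * FreeMonoid.of j) (FreeMonoid.of j * FreeMonoid.of i) :=
  Or.inl ⟨by simp [SqFreeWord, hij.ne], by simp [SqFreeWord, hij.ne'],
    Or.inr ⟨by ext; simp [lettersOf, or_comm], Or.inr ⟨rfl, List.Lex.rel hij⟩⟩⟩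

theorem isLeadWord_antiComm (es : (Fin n →₀ ℕ) → (Fin n →₀ ℕ) → Prop) (hchar : (2 : K) ≠ 0)
    {i j : Fin n} (hij : i ≤ j) :
    IsLeadWord (precT es) (Xv K i * Xv K j + Xv K j * Xv K i)
      (FreeMonoid.of j * FreeMonoid.of i) := by
  rcases hij.eq_or_lt with rfl | hlt
  · rw [Xv_mul_Xv, ← MonoidAlgebra.single_add, one_add_one_eq_two]
    exact isLeadWord_single _ hchar
  · rw [Xv_mul_Xv, Xv_mul_Xv]
    refine isLeadWord_single_add_single (precT_of_mul_of_lt es hlt) (fun h => hlt.ne ?_) 1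
      one_ne_zero
    exact (by simpa using congrArg FreeMonoid.toList h : i = j ∧ j = i).1

theorem not_precT_of_perm_of_pairwise_lt {es : (Fin n →₀ ℕ) → (Fin n →₀ ℕ) → Prop}
    (hes : ∀ a, ¬ es a a) {m w : Word n} (hm : (FreeMonoid.toList m).Pairwise (· < ·))
    (hperm : (FreeMonoid.toList w).Perm (FreeMonoid.toList m)) (hne : w ≠ m) :
    ¬ precT es w m := by
  have hm_sq : SqFreeWord m := hm.imp ne_of_lt
  have hlex := hm.lex_lt_of_perm hperm fun h => hne (FreeMonoid.toList.injective h)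
  have hletters : lettersOf w = lettersOf m := List.toFinset_eq_of_perm _ _ hperm
  rintro (⟨-, -, hE | ⟨-, hlen | ⟨-, hlex'⟩⟩⟩ | ⟨hsq, -⟩)
  · exact hes _ (hletters ▸ hE : precE es (lettersOf m) (lettersOf m))
  · exact hlen.ne hperm.length_eq
  · exact asymm hlex hlex'
  · exact hsq.elim (· (hperm.nodup_iff.mpr hm_sq)) (· hm_sq)

theorem not_pairwise_lt_of_isLeadWord {es : (Fin n →₀ ℕ) → (Fin n →₀ ℕ) → Prop}
    (hes : ∀ a, ¬ es a a) {f : FA K n} (hf : f ∈ antiCommIdeal K n) {m : Word n}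
    (hm : IsLeadWord (precT es) f m) : ¬ (FreeMonoid.toList m).Pairwise (· < ·) := by
  intro hsorted
  have hm_sq : SqFreeWord m := hsorted.imp ne_of_lt
  have hmA : altCoeff K (lettersOf m) m ≠ 0 := by simp [altCoeff, hm_sq]
  obtain ⟨w, hw, hwm, hwA⟩ :
      ∃ w ∈ f.coeff.support, w ≠ m ∧ altCoeff K (lettersOf m) w ≠ 0 := by
    by_contra! h
    have hzero := altFunctional_eq_zero_of_mem (lettersOf m) hf
    rw [altFunctional_apply, Finset.sum_eq_single_of_mem m hm.1
      fun w hw hwm => by rw [h w hw hwm, mul_zero]] at hzero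
    exact mul_ne_zero (Finsupp.mem_support_iff.mp hm.1) hmA hzero
  obtain ⟨hw_sq, hw_letters⟩ := altCoeff_ne_zero hwA
  exact not_precT_of_perm_of_pairwise_lt hes hsorted
    (List.perm_of_nodup_nodup_toFinset_eq hw_sq hm_sq hw_letters) hwm (hm.2 w hw hwm)

theorem exists_descent_of_isLeadWord {es : (Fin n →₀ ℕ) → (Fin n →₀ ℕ) → Prop}
    (hes : ∀ a, ¬ es a a) {f : FA K n} (hf : f ∈ antiCommIdeal K n) {m : Word n}
    (hm : IsLeadWord (precT es) f m) :
    ∃ (p q : Word n) (i j : Fin n), i ≤ j ∧ m = p * (FreeMonoid.of j * FreeMonoid.of i) * q := by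
  have h := not_pairwise_lt_of_isLeadWord hes hf hm
  rw [← List.isChain_iff_pairwise, List.isChain_iff_forall_rel_of_append_cons_cons] at h
  push Not at h
  obtain ⟨j, i, p, q, heq, hij⟩ := h
  exact ⟨FreeMonoid.ofList p, FreeMonoid.ofList q, i, j, hij,
    FreeMonoid.toList.injective (by simp [heq])⟩

theorem inIdeal_antiCommIdeal_le {es : (Fin n →₀ ℕ) → (Fin n →₀ ℕ) → Prop}
    (hes : ∀ a, ¬ es a a) :
    inIdeal (precT es) (antiCommIdeal K n) ≤
      TwoSidedIdeal.span
        { f | ∃ i j : Fin n, i ≤ j ∧ f = ofW K (FreeMonoid.of j * FreeMonoid.of i) } := by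
  refine TwoSidedIdeal.span_le.mpr ?_
  rintro _ ⟨f, m, hf, -, hm, rfl⟩
  obtain ⟨p, q, i, j, hij, rfl⟩ := exists_descent_of_isLeadWord hes hf hm
  rw [SetLike.mem_coe, ofW, map_mul, map_mul]
  exact TwoSidedIdeal.mul_mem_right _ _ _ <| TwoSidedIdeal.mul_mem_left _ _ _ <|
    TwoSidedIdeal.subset_span ⟨i, j, hij, rfl⟩

end LeadingWords

theorem antiCommutators_isGB_general (K : Type) [Field K] (hchar : (2 : K) ≠ 0)
    (n : ℕ)
    (es : (Fin n →₀ ℕ) → (Fin n →₀ ℕ) → Prop)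
    (hes : IsCommMonoidWellOrder n es) :
    IsGB (precT es) (antiCommIdeal K n) (antiCommSet K n) ∧
    inIdeal (precT es) (antiCommIdeal K n) =
      TwoSidedIdeal.span
        { f | ∃ i j : Fin n, i ≤ j ∧ f = ofW K (FreeMonoid.of j * FreeMonoid.of i) } := by
  have hlead := fun (i j : Fin n) (hij : i ≤ j) => isLeadWord_antiComm (K := K) es hchar hij
  have hgens : ∀ g ∈ antiCommSet K n, g ∈ antiCommIdeal K n ∧ g ≠ 0 := by
    rintro _ ⟨i, j, hij, rfl⟩
    exact ⟨TwoSidedIdeal.subset_span ⟨i, j, hij, rfl⟩, ne_zero_of_isLeadWord (hlead i j hij)⟩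
  have hdescents_le : TwoSidedIdeal.span
      { f | ∃ i j : Fin n, i ≤ j ∧ f = ofW K (FreeMonoid.of j * FreeMonoid.of i) } ≤
      TwoSidedIdeal.span
        { h | ∃ g ∈ antiCommSet K n, ∃ m, IsLeadWord (precT es) g m ∧ h = ofW K m } :=
    TwoSidedIdeal.span_mono <| by
      rintro _ ⟨i, j, hij, rfl⟩
      exact ⟨_, ⟨i, j, hij, rfl⟩, _, hlead i j hij, rfl⟩
  have hgens_le : TwoSidedIdeal.span
      { h | ∃ g ∈ antiCommSet K n, ∃ m, IsLeadWord (precT es) g m ∧ h = ofW K m } ≤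
      inIdeal (precT es) (antiCommIdeal K n) :=
    TwoSidedIdeal.span_mono <| by
      rintro _ ⟨g, hg, m, hm, rfl⟩
      exact ⟨g, m, (hgens g hg).1, (hgens g hg).2, hm, rfl⟩
  have hin_le := inIdeal_antiCommIdeal_le (K := K) hes.irrefl
  exact ⟨⟨hgens, le_antisymm hgens_le (hin_le.trans hdescents_le)⟩,
    le_antisymm hin_le (hdescents_le.trans hgens_le)⟩

/-- The anti-commutators `X_iX_j + X_jX_i`, `1 ≤ i ≤ j ≤ n`, form a
Gröbner basis of the anti-commutator ideal `C` with respect to `≺_t`; consequently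
`in_{≺_t}(C)` is the two-sided ideal generated by the words `X_jX_i`, `1 ≤ i ≤ j ≤ n`. -/
theorem antiCommutators_isGB (K : Type) [Field K] (hchar : (2 : K) ≠ 0)
    (n : ℕ) (hn : 1 ≤ n)
    (es : (Fin n →₀ ℕ) → (Fin n →₀ ℕ) → Prop)
    (hes : IsCommMonoidWellOrder n es) :
    IsGB (precT es) (antiCommIdeal K n) (antiCommSet K n) ∧
    inIdeal (precT es) (antiCommIdeal K n) =
      TwoSidedIdeal.span
        { f | ∃ i j : Fin n, i ≤ j ∧ f = ofW K (FreeMonoid.of j * FreeMonoid.of i) } :=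
  antiCommutators_isGB_general K hchar n es hes
end

section
/- In K⟨X_1,X_2,X_3⟩, let b be the two-sided ideal generated by the words X_2X_3, X_1², X_2², X_3², X_2X_1, X_3X_1, X_3X_2. Let β be the algebra automorphism determined by β(X_1) = X_1 + X_2, β(X_2) = X_2, β(X_3) = X_3. Then β(X_1²) = X_1² + X_1X_2 + X_2X_1 + X_2² does not belong to b; in particular, b is not invariant under the Borel transformation β (the generic initial ideal of an ideal containing the anti-commutator ideal need not be Borel-fixed). -/
open scoped BigOperators

/-!
A two-sided ideal of a monoid algebra spanned by monomials consists of the elements each of whose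
monomials has a generator as a factor. Expanding, `β(X_1²)` contains the word `X_1X_2` with
coefficient `1`, and `X_1X_2` has no generator of `b` as a factor; since `X_1² ∈ b`, this also
shows `β(b) ⊄ b`.
-/

namespace MonoidAlgebra

variable {k G : Type*} [Ring k] [Monoid G]

noncomputable def factorIdeal (s : Set G) : TwoSidedIdeal (MonoidAlgebra k G) :=
  TwoSidedIdeal.mk' {x | ∀ m ∈ x.coeff.support, ∃ m' ∈ s, ∃ d e, m = d * m' * e}
    (by simp)
    (fun {x y} hx hy m hm => by
      classical
      exact (Finset.mem_union.1 (Finsupp.support_add hm)).elim (hx m) (hy m))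
    (fun {x} hx m hm => hx m (by simpa using hm))
    (fun {x y} hy m hm => by
      classical
      obtain ⟨a, -, b, hb, rfl⟩ := Finset.mem_mul.1 (support_coeff_mul_subset x y hm)
      obtain ⟨m', hm', d, e, rfl⟩ := hy b hb
      exact ⟨m', hm', a * d, e, by simp only [mul_assoc]⟩)
    (fun {x y} hx m hm => by
      classical
      obtain ⟨a, ha, b, -, rfl⟩ := Finset.mem_mul.1 (support_coeff_mul_subset x y hm)
      obtain ⟨m', hm', d, e, rfl⟩ := hx a ha
      exact ⟨m', hm', d, e * b, by simp only [mul_assoc]⟩)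

theorem mem_factorIdeal {s : Set G} {x : MonoidAlgebra k G} :
    x ∈ factorIdeal s ↔ ∀ m ∈ x.coeff.support, ∃ m' ∈ s, ∃ d e, m = d * m' * e :=
  TwoSidedIdeal.mem_mk' ..

theorem exists_factor_of_mem_span_of_image {s : Set G} {x : MonoidAlgebra k G}
    (hx : x ∈ TwoSidedIdeal.span (of k G '' s)) :
    ∀ m ∈ x.coeff.support, ∃ m' ∈ s, ∃ d e, m = d * m' * e := by
  refine mem_factorIdeal.1 (TwoSidedIdeal.mem_span_iff.1 hx (factorIdeal s) ?_)
  rintro _ ⟨m', hm', rfl⟩ m hm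
  refine ⟨m', hm', 1, 1, ?_⟩
  have : m ∈ ({m'} : Finset G) := Finsupp.support_single_subset (by simpa [of_apply] using hm)
  simpa using this

end MonoidAlgebra

theorem FreeMonoid.exists_eq_mul_mul_iff_isInfix {α : Type*} {v w : FreeMonoid α} :
    (∃ d e, w = d * v * e) ↔ v.toList <:+: w.toList := by
  constructor
  · rintro ⟨d, e, rfl⟩
    exact ⟨d.toList, e.toList, by simp [toList_mul]⟩
  · rintro ⟨l, l', h⟩
    exact ⟨ofList l, ofList l', toList.injective (by simpa [toList_mul] using h.symm)⟩

theorem Xv_mul_Xv_s18 (K : Type) [Field K] {n : ℕ} (i j : Fin n) :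
    Xv K i * Xv K j = ofW K (FreeMonoid.of i * FreeMonoid.of j) :=
  (map_mul (MonoidAlgebra.of K (Word n)) _ _).symm

theorem gin_not_borel_fixed_general (K : Type) [Field K]
    (b : TwoSidedIdeal (FA K 3))
    (hb : b = TwoSidedIdeal.span
      { ofW K (FreeMonoid.of (1 : Fin 3) * FreeMonoid.of (2 : Fin 3)),
        ofW K (FreeMonoid.of (0 : Fin 3) * FreeMonoid.of (0 : Fin 3)),
        ofW K (FreeMonoid.of (1 : Fin 3) * FreeMonoid.of (1 : Fin 3)),
        ofW K (FreeMonoid.of (2 : Fin 3) * FreeMonoid.of (2 : Fin 3)),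
        ofW K (FreeMonoid.of (1 : Fin 3) * FreeMonoid.of (0 : Fin 3)),
        ofW K (FreeMonoid.of (2 : Fin 3) * FreeMonoid.of (0 : Fin 3)),
        ofW K (FreeMonoid.of (2 : Fin 3) * FreeMonoid.of (1 : Fin 3)) })
    (β : FA K 3 →ₐ[K] FA K 3)
    (hβ1 : β (Xv K (0 : Fin 3)) = Xv K (0 : Fin 3) + Xv K (1 : Fin 3)) :
    β (Xv K (0 : Fin 3) * Xv K (0 : Fin 3)) =
      Xv K (0 : Fin 3) * Xv K (0 : Fin 3) + Xv K (0 : Fin 3) * Xv K (1 : Fin 3) +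
        Xv K (1 : Fin 3) * Xv K (0 : Fin 3) + Xv K (1 : Fin 3) * Xv K (1 : Fin 3) ∧
    β (Xv K (0 : Fin 3) * Xv K (0 : Fin 3)) ∉ b ∧
    ¬ (⇑β '' (b : Set (FA K 3)) ⊆ (b : Set (FA K 3))) := by
  have hexp : β (Xv K 0 * Xv K 0) =
      Xv K 0 * Xv K 0 + Xv K 0 * Xv K 1 + Xv K 1 * Xv K 0 + Xv K 1 * Xv K 1 := by
    rw [map_mul, hβ1]
    noncomm_ring
  have hsupp : FreeMonoid.of 0 * FreeMonoid.of 1 ∈ (β (Xv K 0 * Xv K 0)).coeff.support := by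
    rw [hexp, Xv_mul_Xv_s18, Xv_mul_Xv_s18, Xv_mul_Xv_s18, Xv_mul_Xv_s18, Finsupp.mem_support_iff]
    have h10 : (FreeMonoid.of 1 * FreeMonoid.of 0 : Word 3) ≠ FreeMonoid.of 0 * FreeMonoid.of 1 :=
      FreeMonoid.toList.injective.ne (by decide : ([1, 0] : List (Fin 3)) ≠ [0, 1])
    simp [ofW, MonoidAlgebra.coeff_single, FreeMonoid.of_injective.eq_iff, h10]
  have hnotmem : β (Xv K 0 * Xv K 0) ∉ b := by
    intro hmem
    rw [hb, ← Set.image_singleton (f := ofW K)] at hmem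
    simp only [← Set.image_insert_eq] at hmem
    obtain ⟨m', hm', hfactor⟩ := MonoidAlgebra.exists_factor_of_mem_span_of_image hmem _ hsupp
    rw [FreeMonoid.exists_eq_mul_mul_iff_isInfix] at hfactor
    simp only [Set.mem_insert_iff, Set.mem_singleton_iff] at hm'
    rcases hm' with rfl | rfl | rfl | rfl | rfl | rfl | rfl <;> revert hfactor <;> decide
  refine ⟨hexp, hnotmem, fun hsubset => hnotmem (hsubset ⟨Xv K 0 * Xv K 0, ?_, rfl⟩)⟩
  rw [hb, Xv_mul_Xv_s18]
  exact TwoSidedIdeal.subset_span (by simp)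

/-- In `K⟨X_1,X_2,X_3⟩`, let `b` be the two-sided (monomial) ideal
generated by the words `X_2X_3, X_1², X_2², X_3², X_2X_1, X_3X_1, X_3X_2`, and let `β`
be the algebra automorphism determined by `β(X_1) = X_1 + X_2`, `β(X_2) = X_2`,
`β(X_3) = X_3`.  Then `β(X_1²) = X_1² + X_1X_2 + X_2X_1 + X_2²` does not belong to
`b`; in particular `b` is not invariant under the Borel transformation `β`. -/
theorem gin_not_borel_fixed (K : Type) [Field K] (hchar : (2 : K) ≠ 0)
    (b : TwoSidedIdeal (FA K 3))
    (hb : b = TwoSidedIdeal.span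
      { ofW K (FreeMonoid.of (1 : Fin 3) * FreeMonoid.of (2 : Fin 3)),
        ofW K (FreeMonoid.of (0 : Fin 3) * FreeMonoid.of (0 : Fin 3)),
        ofW K (FreeMonoid.of (1 : Fin 3) * FreeMonoid.of (1 : Fin 3)),
        ofW K (FreeMonoid.of (2 : Fin 3) * FreeMonoid.of (2 : Fin 3)),
        ofW K (FreeMonoid.of (1 : Fin 3) * FreeMonoid.of (0 : Fin 3)),
        ofW K (FreeMonoid.of (2 : Fin 3) * FreeMonoid.of (0 : Fin 3)),
        ofW K (FreeMonoid.of (2 : Fin 3) * FreeMonoid.of (1 : Fin 3)) })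
    (β : FA K 3 →ₐ[K] FA K 3)
    (hβ1 : β (Xv K (0 : Fin 3)) = Xv K (0 : Fin 3) + Xv K (1 : Fin 3))
    (hβ2 : β (Xv K (1 : Fin 3)) = Xv K (1 : Fin 3))
    (hβ3 : β (Xv K (2 : Fin 3)) = Xv K (2 : Fin 3)) :
    β (Xv K (0 : Fin 3) * Xv K (0 : Fin 3)) =
      Xv K (0 : Fin 3) * Xv K (0 : Fin 3) + Xv K (0 : Fin 3) * Xv K (1 : Fin 3) +
        Xv K (1 : Fin 3) * Xv K (0 : Fin 3) + Xv K (1 : Fin 3) * Xv K (1 : Fin 3) ∧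
    β (Xv K (0 : Fin 3) * Xv K (0 : Fin 3)) ∉ b ∧
    ¬ (⇑β '' (b : Set (FA K 3)) ⊆ (b : Set (FA K 3))) :=
  gin_not_borel_fixed_general K b hb β hβ1
end
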